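/- Let C be a unital C*-algebra, let α be a *-automorphism of C, and let J be a closed two-sided ideal of C with {0} ≠ J ≠ C. Assume that for every k ∈ ℤ \ {0} there exists f ∈ C with 0 ≤ f ≤ 1 such that α^{-k}(f) ∈ J, 1 − f ∈ J, and f c α^{-k}(f) = 0 for all c ∈ C. Then for every n ∈ ℤ_{>0} there exists a closed two-sided ideal I ⊆ ⋂_{k=1}^n α^{-k}(J) such that the ideals α^{-n}(I), α^{-n+1}(I), …, α^{n}(I) are pairwise orthogonal and J + I = C. -/

import Mathlib

/-- The `n`-th iterate (`n ∈ ℤ`) of a *-automorphism `α`, using inverse iterates for `n < 0`. -/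
def zpowIter {C : Type*} [CStarAlgebra C] (α : C ≃⋆ₐ[ℂ] C) (n : ℤ) : C → C :=
  if 0 ≤ n then (⇑α)^[n.toNat] else (⇑α.symm)^[(-n).toNat]

/-! Multiplying the elements `f` given by the hypothesis for `k = ±1, …, ±2n` yields one `p` with
`1 - p ∈ J`, `αᵏ p ∈ J` for `1 ≤ k ≤ n`, and `p c αᵐ(p) = 0` for `0 < |m| ≤ 2n`: each of these
properties survives multiplication by arbitrary elements on either side, and
`1 - ab = (1 - a) + a (1 - b)`. The closed ideal `I` generated by `p` works: `αʲ(I)` lies in the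
closed ideal generated by `αʲ p`, and `αʲ p · c · αᵏ p = αʲ (p · α⁻ʲ c · αᵏ⁻ʲ p) = 0` for `j ≠ k`.
Finally `c = (1 - p) c + p c`. -/

namespace TwoSidedIdeal

section Ring

variable {R : Type*} [Ring R]

lemma mul_mul_eq_zero_of_mem_span_singleton {p q x y : R} (h : ∀ c, p * c * q = 0)
    (hx : x ∈ span {p}) (hy : y ∈ span {q}) (c : R) : x * c * y = 0 := by
  induction hx using span_induction generalizing c with
  | mem x hx =>
    rw [Set.mem_singleton_iff.1 hx]
    induction hy using span_induction generalizing c with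
    | mem y hy => rw [Set.mem_singleton_iff.1 hy]; exact h c
    | zero => simp
    | add y y' _ _ h h' => simp [mul_add, h, h']
    | neg y _ h => simp [h]
    | left_absorb a y _ h => simpa [mul_assoc] using h (c * a)
    | right_absorb b y _ h => rw [← mul_assoc, h, zero_mul]
  | zero => simp
  | add x x' _ _ h h' => simp [add_mul, h, h']
  | neg x _ h => simp [h]
  | left_absorb a x _ h => rw [mul_assoc a, mul_assoc a, h, mul_zero]
  | right_absorb b x _ h => rw [mul_assoc x, h]

lemma one_sub_mul_mem {J : TwoSidedIdeal R} {a b : R} (ha : 1 - a ∈ J) (hb : 1 - b ∈ J) :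
    1 - a * b ∈ J := by
  have : 1 - a * b = (1 - a) + a * (1 - b) := by noncomm_ring
  rw [this]
  exact J.add_mem ha (J.mul_mem_left a _ hb)

lemma exists_one_sub_mem_forall_of_absorbing {ι : Type*} (J : TwoSidedIdeal R)
    (Q : ι → R → Prop) (hQ : ∀ i x a b, Q i x → Q i (a * x * b)) (S : Finset ι)
    (h : ∀ i ∈ S, ∃ f, 1 - f ∈ J ∧ Q i f) : ∃ p, 1 - p ∈ J ∧ ∀ i ∈ S, Q i p := by
  classical
  induction S using Finset.induction_on with
  | empty => exact ⟨1, by simp, by simp⟩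
  | insert i S _ ih =>
    obtain ⟨f, hfJ, hf⟩ := h i (Finset.mem_insert_self i S)
    obtain ⟨p, hpJ, hp⟩ := ih fun j hj => h j (Finset.mem_insert_of_mem hj)
    refine ⟨f * p, one_sub_mul_mem hfJ hpJ, ?_⟩
    simp only [Finset.mem_insert, forall_eq_or_imp]
    exact ⟨by simpa using hQ i f 1 p hf, fun j hj => by simpa using hQ j p f 1 (hp j hj)⟩

end Ring

section Topology

variable {R : Type*} [Ring R] [TopologicalSpace R] [IsTopologicalRing R]

def topologicalClosure (I : TwoSidedIdeal R) : TwoSidedIdeal R :=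
  .mk' (closure I) (subset_closure I.zero_mem)
    (fun hx hy => map_mem_closure₂ continuous_add hx hy fun _ ha _ hb => I.add_mem ha hb)
    (fun hx => map_mem_closure continuous_neg hx fun _ ha => I.neg_mem ha)
    (fun {x _} hy => map_mem_closure (continuous_const_mul x) hy fun _ hb => I.mul_mem_left x _ hb)
    (fun {_ y} hx => map_mem_closure (f := (· * y)) (continuous_mul_const y) hx
      fun _ ha => I.mul_mem_right _ y ha)

variable {I K : TwoSidedIdeal R}

lemma coe_topologicalClosure : (I.topologicalClosure : Set R) = closure I := by
  rw [topologicalClosure, coe_mk']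

lemma isClosed_topologicalClosure : IsClosed (I.topologicalClosure : Set R) := by
  rw [coe_topologicalClosure]
  exact isClosed_closure

lemma topologicalClosure_le (h : I ≤ K) (hK : IsClosed (K : Set R)) :
    I.topologicalClosure ≤ K := by
  intro x hx
  rw [← SetLike.mem_coe, coe_topologicalClosure] at hx
  exact closure_minimal h hK hx

lemma self_mem_topologicalClosure_span_singleton (p : R) :
    p ∈ (span {p}).topologicalClosure := by
  rw [← SetLike.mem_coe, coe_topologicalClosure]
  exact subset_closure (subset_span (Set.mem_singleton p))

lemma topologicalClosure_span_singleton_le_comap {S F : Type*} [Ring S] [TopologicalSpace S]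
    [FunLike F R S] [RingHomClass F R S] {e : F} (he : Continuous e) {p : R}
    {K : TwoSidedIdeal S} (hK : IsClosed (K : Set S)) (hp : e p ∈ K) :
    (span {p}).topologicalClosure ≤ K.comap e := by
  refine topologicalClosure_le (span_le.2 (by simpa [mem_comap] using hp)) ?_
  convert hK.preimage he
  ext
  exact mem_comap e

lemma mul_eq_zero_of_mem_topologicalClosure_span_singleton [T1Space R] {p q x y : R}
    (h : ∀ c, p * c * q = 0) (hx : x ∈ (span {p}).topologicalClosure)
    (hy : y ∈ (span {q}).topologicalClosure) : x * y = 0 := by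
  rw [← SetLike.mem_coe, coe_topologicalClosure] at hx hy
  have := map_mem_closure₂ continuous_mul hx hy (u := {0}) fun a ha b hb => by
    simpa using mul_mul_eq_zero_of_mem_span_singleton h ha hb 1
  rwa [closure_singleton] at this

end Topology

end TwoSidedIdeal

lemma zpowIter_eq_coe_zpow {C : Type*} [CStarAlgebra C] (α : C ≃⋆ₐ[ℂ] C) (n : ℤ) :
    zpowIter α n = ⇑(α ^ n) := by
  unfold zpowIter
  split_ifs with h
  · obtain ⟨m, rfl⟩ := Int.eq_ofNat_of_zero_le h
    simp
  · obtain ⟨m, rfl⟩ := Int.exists_eq_neg_ofNat (le_of_lt (not_le.1 h))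
    rw [neg_neg, Int.toNat_natCast, zpow_neg, zpow_natCast, ← inv_pow, StarAlgEquiv.coe_pow,
      StarAlgEquiv.aut_inv]

lemma mul_mul_map_mul_mul_eq_zero {R F : Type*} [Ring R] [FunLike F R R] [RingHomClass F R R]
    (σ : F) {x : R} (h : ∀ c, x * c * σ x = 0) (a b c : R) :
    a * x * b * c * σ (a * x * b) = 0 :=
  calc a * x * b * c * σ (a * x * b) = a * (x * (b * c * σ a) * σ x) * σ b := by
        simp only [map_mul, mul_assoc]
    _ = 0 := by rw [h, mul_zero, zero_mul]

lemma StarAlgEquiv.image_iterate_symm {R S : Type*} [Mul R] [Add R] [Star R] [SMul S R]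
    (α : R ≃⋆ₐ[S] R) (k : ℕ) (s : Set R) : (⇑α.symm)^[k] '' s = ⇑(α ^ k) ⁻¹' s := by
  rw [← StarAlgEquiv.aut_inv, ← StarAlgEquiv.coe_pow, inv_pow]
  exact congrFun (Set.image_eq_preimage_of_inverse (α ^ k).apply_symm_apply
    (α ^ k).symm_apply_apply) s

lemma StarAlgEquiv.zpow_apply_mul_mul_zpow_apply_eq_zero {R S : Type*} [Ring R] [Star R]
    [SMul S R] (α : R ≃⋆ₐ[S] R) {p : R} {j k : ℤ} (h : ∀ c, p * c * (α ^ (k - j)) p = 0)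
    (c : R) : (α ^ j) p * c * (α ^ k) p = 0 := by
  have key := congrArg (α ^ j) (h ((α ^ (-j)) c))
  rwa [map_zero, map_mul, map_mul, ← StarAlgEquiv.mul_apply, ← StarAlgEquiv.mul_apply,
    ← zpow_add, ← zpow_add, add_neg_cancel, zpow_zero, StarAlgEquiv.one_apply,
    add_sub_cancel] at key

open TwoSidedIdeal in
theorem exists_orthogonal_ideal_complementing_general
    {C : Type*} [CStarAlgebra C] [PartialOrder C]
    (α : C ≃⋆ₐ[ℂ] C) (J : TwoSidedIdeal C)
    (hJclosed : IsClosed (J : Set C))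
    (hyp : ∀ k : ℤ, k ≠ 0 → ∃ f : C, 0 ≤ f ∧ f ≤ 1 ∧
      zpowIter α (-k) f ∈ J ∧ 1 - f ∈ J ∧ ∀ c : C, f * c * zpowIter α (-k) f = 0) :
    ∀ n : ℕ, 0 < n → ∃ I : TwoSidedIdeal C, IsClosed (I : Set C) ∧
      (I : Set C) ⊆ ⋂ k ∈ Finset.Icc 1 n, (⇑α.symm)^[k] '' (J : Set C) ∧
      (∀ j k : ℤ, -(n : ℤ) ≤ j → j ≤ n → -(n : ℤ) ≤ k → k ≤ n → j ≠ k →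
        ∀ a ∈ zpowIter α j '' (I : Set C), ∀ b ∈ zpowIter α k '' (I : Set C), a * b = 0) ∧
      (∀ c : C, ∃ a ∈ J, ∃ b ∈ I, a + b = c) := by
  intro n _
  simp only [zpowIter_eq_coe_zpow] at hyp ⊢
  have hcont (j : ℤ) : Continuous (α ^ j) := (StarAlgEquiv.isometry _).continuous
  obtain ⟨p, hpJ, hp⟩ := J.exists_one_sub_mem_forall_of_absorbing
    (fun (k : ℤ) x => (α ^ k) x ∈ J ∧ ∀ c, x * c * (α ^ k) x = 0)
    (fun k x a b ⟨hxJ, hx⟩ => ⟨by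
      simpa only [map_mul] using J.mul_mem_right _ _ (J.mul_mem_left _ _ hxJ),
      mul_mul_map_mul_mul_eq_zero _ hx a b⟩)
    ((Finset.Icc (-(2 * n : ℤ)) (2 * n)).erase 0)
    (fun k hk => by
      obtain ⟨f, -, -, hfJ', hfJ, hf⟩ := hyp (-k) (neg_ne_zero.2 (Finset.ne_of_mem_erase hk))
      rw [neg_neg] at hfJ' hf
      exact ⟨f, hfJ, hfJ', hf⟩)
  set I := (span {p}).topologicalClosure
  have hmap (j : ℤ) : I ≤ (span {(α ^ j) p}).topologicalClosure.comap (α ^ j) :=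
    topologicalClosure_span_singleton_le_comap (hcont j) isClosed_topologicalClosure
      (self_mem_topologicalClosure_span_singleton _)
  refine ⟨I, isClosed_topologicalClosure, fun x hx => ?_, ?_,
    fun c => ⟨(1 - p) * c, J.mul_mem_right _ _ hpJ, p * c, ?_, by noncomm_ring⟩⟩
  · simp only [Set.mem_iInter, Finset.mem_Icc, StarAlgEquiv.image_iterate_symm]
    intro k hk
    have hkJ := (hp k (by simp only [Finset.mem_erase, Finset.mem_Icc]; omega)).1
    exact mem_comap _ |>.1 (topologicalClosure_span_singleton_le_comap (hcont k) hJclosed hkJ hx)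
  · rintro j k hj hjn hk hkn hjk _ ⟨x, hx, rfl⟩ _ ⟨y, hy, rfl⟩
    have hkj := (hp (k - j) (by simp only [Finset.mem_erase, Finset.mem_Icc]; omega)).2
    exact mul_eq_zero_of_mem_topologicalClosure_span_singleton
      (α.zpow_apply_mul_mul_zpow_apply_eq_zero hkj) (mem_comap _ |>.1 (hmap j hx))
      (mem_comap _ |>.1 (hmap k hy))
  · exact mul_mem_right _ _ _ (self_mem_topologicalClosure_span_singleton p)

/-- Let `C` be a unital C*-algebra, `α` a *-automorphism of `C`, and `J` a
nontrivial closed two-sided ideal of `C`.  Assume that for every `k ∈ ℤ \ {0}` there is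
`f ∈ C` with `0 ≤ f ≤ 1` such that `α⁻ᵏ(f) ∈ J`, `1 - f ∈ J`, and `f c α⁻ᵏ(f) = 0` for all
`c ∈ C`.  Then for every `n > 0` there is a closed two-sided ideal
`I ⊆ ⋂_{k=1}^n α⁻ᵏ(J)` such that the ideals `α⁻ⁿ(I), …, αⁿ(I)` are pairwise orthogonal and
`J + I = C`. -/
theorem exists_orthogonal_ideal_complementing
    {C : Type*} [CStarAlgebra C] [PartialOrder C] [StarOrderedRing C]
    (α : C ≃⋆ₐ[ℂ] C) (J : TwoSidedIdeal C)
    (hJclosed : IsClosed (J : Set C)) (hJbot : J ≠ ⊥) (hJtop : J ≠ ⊤)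
    (hyp : ∀ k : ℤ, k ≠ 0 → ∃ f : C, 0 ≤ f ∧ f ≤ 1 ∧
      zpowIter α (-k) f ∈ J ∧ 1 - f ∈ J ∧ ∀ c : C, f * c * zpowIter α (-k) f = 0) :
    ∀ n : ℕ, 0 < n → ∃ I : TwoSidedIdeal C, IsClosed (I : Set C) ∧
      (I : Set C) ⊆ ⋂ k ∈ Finset.Icc 1 n, (⇑α.symm)^[k] '' (J : Set C) ∧
      (∀ j k : ℤ, -(n : ℤ) ≤ j → j ≤ n → -(n : ℤ) ≤ k → k ≤ n → j ≠ k →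
        ∀ a ∈ zpowIter α j '' (I : Set C), ∀ b ∈ zpowIter α k '' (I : Set C), a * b = 0) ∧
      (∀ c : C, ∃ a ∈ J, ∃ b ∈ I, a + b = c) :=
  exists_orthogonal_ideal_complementing_general α J hJclosed hyp
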